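/- arXiv:2209.02659 — 5 statements merged into one kernel-verified Lean document; each statement's English description precedes it below -/
import Mathlib

section
/- Let Ω ⊆ ℝ² be open and let v : Ω → ℝ be twice continuously differentiable. Then at every point of Ω one has the identity |D²v Dv|² − (Δv)(Δ∞v) = (1/2)(|D²v|² − (Δv)²)|Dv|². -/
open Real MeasureTheory
open scoped RealInnerProductSpace

noncomputable section

/-- The Euclidean plane ℝ². -/
abbrev E2 : Type := EuclideanSpace ℝ (Fin 2)

/-- Standard basis vector. -/
def ee (i : Fin 2) : E2 := EuclideanSpace.single i (1 : ℝ)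

/-- Partial derivative ∂ᵢf. -/
def pd (i : Fin 2) (f : E2 → ℝ) (x : E2) : ℝ := fderiv ℝ f x (ee i)

/-- Second partial derivative ∂ᵢ∂ⱼf. -/
def pd2 (i j : Fin 2) (f : E2 → ℝ) (x : E2) : ℝ := pd i (pd j f) x

/-- |Df|², squared Euclidean norm of the gradient. -/
def gradSq (f : E2 → ℝ) (x : E2) : ℝ := (pd 0 f x) ^ 2 + (pd 1 f x) ^ 2

/-- |Df|, Euclidean norm of the gradient. -/
def gradNorm (f : E2 → ℝ) (x : E2) : ℝ := Real.sqrt (gradSq f x)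

/-- Laplacian Δf = tr D²f. -/
def lap (f : E2 → ℝ) (x : E2) : ℝ := pd2 0 0 f x + pd2 1 1 f x

/-- ∞-Laplacian Δ∞f = D²f Df · Df. -/
def infLap (f : E2 → ℝ) (x : E2) : ℝ :=
  pd2 0 0 f x * pd 0 f x * pd 0 f x + pd2 0 1 f x * pd 0 f x * pd 1 f x +
  pd2 1 0 f x * pd 1 f x * pd 0 f x + pd2 1 1 f x * pd 1 f x * pd 1 f x

/-- |D²f|², squared Frobenius norm of the Hessian. -/
def hessFrobSq (f : E2 → ℝ) (x : E2) : ℝ :=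
  (pd2 0 0 f x) ^ 2 + (pd2 0 1 f x) ^ 2 + (pd2 1 0 f x) ^ 2 + (pd2 1 1 f x) ^ 2

/-- det D²f, determinant of the Hessian. -/
def detHess (f : E2 → ℝ) (x : E2) : ℝ :=
  pd2 0 0 f x * pd2 1 1 f x - pd2 0 1 f x * pd2 1 0 f x

/-- |D²f Df|². -/
def hessGradSq (f : E2 → ℝ) (x : E2) : ℝ :=
  (pd2 0 0 f x * pd 0 f x + pd2 0 1 f x * pd 1 f x) ^ 2 +
  (pd2 1 0 f x * pd 0 f x + pd2 1 1 f x * pd 1 f x) ^ 2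

/-- Jacobian determinant of the planar map with components `F 0`, `F 1`. -/
def jdet (F : Fin 2 → E2 → ℝ) (x : E2) : ℝ :=
  pd 0 (F 0) x * pd 1 (F 1) x - pd 1 (F 0) x * pd 0 (F 1) x

/-- Squared Frobenius norm of the Jacobian of the planar map with components `F 0`, `F 1`. -/
def jFrobSq (F : Fin 2 → E2 → ℝ) (x : E2) : ℝ :=
  (pd 0 (F 0) x) ^ 2 + (pd 1 (F 0) x) ^ 2 + (pd 0 (F 1) x) ^ 2 + (pd 1 (F 1) x) ^ 2

/-- Df · Dg. -/
def gradDot (f g : E2 → ℝ) (x : E2) : ℝ :=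
  pd 0 f x * pd 0 g x + pd 1 f x * pd 1 g x

/-- D²ψ Dv · Dv. -/
def hessQuad (ψ v : E2 → ℝ) (x : E2) : ℝ :=
  pd2 0 0 ψ x * pd 0 v x * pd 0 v x + pd2 0 1 ψ x * pd 0 v x * pd 1 v x +
  pd2 1 0 ψ x * pd 1 v x * pd 0 v x + pd2 1 1 ψ x * pd 1 v x * pd 1 v x

/-- (D²v Dv) · Dψ. -/
def hessGradDot (v ψ : E2 → ℝ) (x : E2) : ℝ :=
  (pd2 0 0 v x * pd 0 v x + pd2 0 1 v x * pd 1 v x) * pd 0 ψ x +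
  (pd2 1 0 v x * pd 0 v x + pd2 1 1 v x * pd 1 v x) * pd 1 ψ x

/-- Smooth compactly supported test function on Ω. -/
def IsTestOn (ψ : E2 → ℝ) (Ω : Set E2) : Prop :=
  ContDiff ℝ (⊤ : ℕ∞) ψ ∧ HasCompactSupport ψ ∧ tsupport ψ ⊆ Ω

/-- Components of W = |Dv|⁻¹ Dv. -/
def Wcomp (v : E2 → ℝ) (i : Fin 2) : E2 → ℝ := fun y => (gradNorm v y)⁻¹ * pd i v y

/- Both sides of the identity are polynomials in the entries of `Dv` and `D²v`; they agree
identically once `D²v` is symmetric, and Schwarz's theorem supplies that symmetry for `C²` functions. -/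

lemma pd2_eq_fderiv_fderiv {f : E2 → ℝ} {x : E2} (i j : Fin 2)
    (hf : DifferentiableAt ℝ (fderiv ℝ f) x) :
    pd2 i j f x = fderiv ℝ (fderiv ℝ f) x (ee i) (ee j) := by
  have h := fderiv_clm_apply hf (differentiableAt_const (ee j))
  simp only [fderiv_fun_const, Pi.zero_apply, ContinuousLinearMap.comp_zero, zero_add] at h
  change fderiv ℝ (fun y => fderiv ℝ f y (ee j)) x (ee i) = _
  rw [h]
  rfl

lemma pd2_comm {f : E2 → ℝ} {x : E2} (hf : ContDiffAt ℝ 2 f x) (i j : Fin 2) :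
    pd2 i j f x = pd2 j i f x := by
  have hdiff : DifferentiableAt ℝ (fderiv ℝ f) x :=
    (hf.fderiv_right (m := 1) le_rfl).differentiableAt one_ne_zero
  rw [pd2_eq_fderiv_fderiv i j hdiff, pd2_eq_fderiv_fderiv j i hdiff]
  exact hf.isSymmSndFDerivAt (by simp) _ _

/-- the fundamental structural identity
|D²v Dv|² − (Δv)(Δ∞v) = (1/2)(|D²v|² − (Δv)²)|Dv|² on Ω. -/
theorem stmt_0 (Ω : Set E2) (hΩ : IsOpen Ω) (v : E2 → ℝ)
    (hv : ContDiffOn ℝ 2 v Ω) :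
    ∀ x ∈ Ω,
      hessGradSq v x - lap v x * infLap v x
        = (1/2) * (hessFrobSq v x - (lap v x) ^ 2) * gradSq v x := by
  intro x hx
  have hsymm := pd2_comm (hv.contDiffAt (hΩ.mem_nhds hx)) 0 1
  simp only [hessGradSq, lap, infLap, hessFrobSq, gradSq]
  rw [hsymm]
  ring
end
end

section
/- Let Ω ⊆ ℝ² be open, v ∈ C^∞(Ω), and ψ ∈ C_c^∞(Ω). Then ∫_Ω (−det D²v) ψ dx = −(1/2) ∫_Ω (D²v Dv − (Δv) Dv) · Dψ dx = (1/2) ∫_Ω (|Dv|² Δψ − D²ψ Dv · Dv) dx. -/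
open Real MeasureTheory
open scoped RealInnerProductSpace

noncomputable section

open Filter Topology

lemma pd2_def (i j : Fin 2) (f : E2 → ℝ) : pd2 i j f = pd i (pd j f) := rfl

lemma pd_congr {f g : E2 → ℝ} {x : E2} (h : f =ᶠ[𝓝 x] g) (i : Fin 2) : pd i f x = pd i g x := by
  unfold pd; rw [h.fderiv_eq]

lemma pd_eventually_zero {f : E2 → ℝ} {x : E2} (h : ∀ᶠ y in 𝓝 x, f y = 0) (i : Fin 2) :
    pd i f x = 0 := by
  have h' : f =ᶠ[𝓝 x] (fun _ => (0:ℝ)) := h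
  unfold pd
  rw [h'.fderiv_eq]
  simp

lemma contDiffAt_pd {f : E2 → ℝ} {x : E2} (hf : ContDiffAt ℝ (⊤:ℕ∞) f x) (i : Fin 2) :
    ContDiffAt ℝ (⊤:ℕ∞) (pd i f) x := by
  have h1 : ContDiffAt ℝ (⊤:ℕ∞) (fderiv ℝ f) x := hf.fderiv_right (by exact_mod_cast le_top)
  exact h1.clm_apply contDiffAt_const

lemma diffAt_of_smoothAt {f : E2 → ℝ} {x : E2} (hf : ContDiffAt ℝ (⊤:ℕ∞) f x) :
    DifferentiableAt ℝ f x := hf.differentiableAt (by simp)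

lemma pd_mul {a b : E2 → ℝ} {x : E2} (i : Fin 2) (ha : DifferentiableAt ℝ a x)
    (hb : DifferentiableAt ℝ b x) :
    pd i (fun y => a y * b y) x = pd i a x * b x + a x * pd i b x := by
  unfold pd
  rw [fderiv_fun_mul ha hb]
  simp only [ContinuousLinearMap.add_apply, ContinuousLinearMap.smul_apply, smul_eq_mul]
  ring

lemma pd_add {a b : E2 → ℝ} {x : E2} (i : Fin 2) (ha : DifferentiableAt ℝ a x)
    (hb : DifferentiableAt ℝ b x) :
    pd i (fun y => a y + b y) x = pd i a x + pd i b x := by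
  unfold pd
  rw [fderiv_fun_add ha hb]
  simp

lemma pd_sub {a b : E2 → ℝ} {x : E2} (i : Fin 2) (ha : DifferentiableAt ℝ a x)
    (hb : DifferentiableAt ℝ b x) :
    pd i (fun y => a y - b y) x = pd i a x - pd i b x := by
  unfold pd
  rw [fderiv_fun_sub ha hb]
  simp

lemma pd2_symm {f : E2 → ℝ} {x : E2} (hf : ContDiffAt ℝ (⊤:ℕ∞) f x) (i j : Fin 2) :
    pd2 i j f x = pd2 j i f x := by
  have h1 : ContDiffAt ℝ (⊤:ℕ∞) (fderiv ℝ f) x := hf.fderiv_right (by exact_mod_cast le_top)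
  have hd : DifferentiableAt ℝ (fderiv ℝ f) x :=
    h1.differentiableAt (by simp)
  have hs : IsSymmSndFDerivAt ℝ f x := hf.isSymmSndFDerivAt (by rw [minSmoothness_of_isRCLikeNormedField]; exact WithTop.coe_le_coe.2 (le_top : (2:ℕ∞) ≤ ⊤))
  have key : ∀ k l : Fin 2, pd2 k l f x = fderiv ℝ (fderiv ℝ f) x (ee k) (ee l) := by
    intro k l
    show fderiv ℝ (fun y => (fderiv ℝ f y) (ee l)) x (ee k) = _
    rw [fderiv_clm_apply hd (differentiableAt_const _)]
    simp
  rw [key, key, hs.eq]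

lemma contDiff_glue {f : E2 → ℝ} {Ω K : Set E2} (hK : IsClosed K) (hKΩ : K ⊆ Ω)
    (h1 : ∀ x ∈ Ω, ContDiffAt ℝ (⊤:ℕ∞) f x) (h0 : ∀ x ∉ K, f x = 0) :
    ContDiff ℝ (⊤:ℕ∞) f := by
  rw [contDiff_iff_contDiffAt]
  intro x
  by_cases hx : x ∈ Ω
  · exact h1 x hx
  · have hx' : x ∈ Kᶜ := fun h => hx (hKΩ h)
    have hev : f =ᶠ[𝓝 x] (fun _ => (0:ℝ)) :=
      eventually_of_mem (hK.isOpen_compl.mem_nhds hx') h0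
    exact (contDiffAt_const (c := (0:ℝ))).congr_of_eventuallyEq hev

lemma integral_pd_eq_zero {g : E2 → ℝ} (hg : ContDiff ℝ (⊤:ℕ∞) g) (hc : HasCompactSupport g)
    (i : Fin 2) : ∫ x, pd i g x = 0 := by
  obtain ⟨C, hC⟩ := ContDiff.lipschitzWith_of_hasCompactSupport hc hg (by simp)
  have h0 : LipschitzWith 0 (fun _ : E2 => (1:ℝ)) := LipschitzWith.const 1
  have key := LipschitzWith.integral_lineDeriv_mul_eq (μ := (volume : Measure E2)) h0 hC hc (-(ee i))
  have hc1 : ∀ (x w : E2), lineDeriv ℝ (fun _ : E2 => (1:ℝ)) x w = 0 := by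
    intro x w
    rw [(differentiableAt_const (1:ℝ)).lineDeriv_eq_fderiv]
    simp
  simp only [hc1, zero_mul, integral_zero, neg_neg, mul_one] at key
  have hdiff : ∀ x : E2, DifferentiableAt ℝ g x :=
    fun x => (hg.differentiable (by simp)).differentiableAt
  have hld : ∀ x : E2, lineDeriv ℝ g x (ee i) = pd i g x :=
    fun x => (hdiff x).lineDeriv_eq_fderiv
  simp only [hld] at key
  exact key.symm

lemma pd_comb_sub {p q r s t : E2 → ℝ} {x : E2} (i : Fin 2)
    (hp : DifferentiableAt ℝ p x) (hq : DifferentiableAt ℝ q x) (hr : DifferentiableAt ℝ r x)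
    (hs : DifferentiableAt ℝ s x) (ht : DifferentiableAt ℝ t x) :
    pd i (fun y => (p y * q y - r y * s y) * t y) x =
      (pd i p x * q x + p x * pd i q x - (pd i r x * s x + r x * pd i s x)) * t x
        + (p x * q x - r x * s x) * pd i t x := by
  rw [pd_mul (a := fun y => p y * q y - r y * s y) i ((hp.mul hq).sub (hr.mul hs)) ht,
      pd_sub (a := fun y => p y * q y) (b := fun y => r y * s y) i (hp.mul hq) (hr.mul hs),
      pd_mul i hp hq, pd_mul i hr hs]

lemma pd_comb_add {p q r s t : E2 → ℝ} {x : E2} (i : Fin 2)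
    (hp : DifferentiableAt ℝ p x) (hq : DifferentiableAt ℝ q x) (hr : DifferentiableAt ℝ r x)
    (hs : DifferentiableAt ℝ s x) (ht : DifferentiableAt ℝ t x) :
    pd i (fun y => (p y * q y + r y * s y) * t y) x =
      (pd i p x * q x + p x * pd i q x + (pd i r x * s x + r x * pd i s x)) * t x
        + (p x * q x + r x * s x) * pd i t x := by
  rw [pd_mul (a := fun y => p y * q y + r y * s y) i ((hp.mul hq).add (hr.mul hs)) ht,
      pd_add (a := fun y => p y * q y) (b := fun y => r y * s y) i (hp.mul hq) (hr.mul hs),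
      pd_mul i hp hq, pd_mul i hr hs]

lemma pd_comb_mul_add {p q r s t : E2 → ℝ} {x : E2} (i : Fin 2)
    (ht : DifferentiableAt ℝ t x) (hp : DifferentiableAt ℝ p x) (hq : DifferentiableAt ℝ q x)
    (hr : DifferentiableAt ℝ r x) (hs : DifferentiableAt ℝ s x) :
    pd i (fun y => t y * (p y * q y + r y * s y)) x =
      pd i t x * (p x * q x + r x * s x)
        + t x * (pd i p x * q x + p x * pd i q x + (pd i r x * s x + r x * pd i s x)) := by
  rw [pd_mul (b := fun y => p y * q y + r y * s y) i ht ((hp.mul hq).add (hr.mul hs)),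
      pd_add (a := fun y => p y * q y) (b := fun y => r y * s y) i (hp.mul hq) (hr.mul hs),
      pd_mul i hp hq, pd_mul i hr hs]

lemma div1 {v ψ : E2 → ℝ} {x : E2} (hev : ∀ᶠ y in 𝓝 x, ContDiffAt ℝ (⊤:ℕ∞) v y)
    (hψ : ContDiff ℝ (⊤:ℕ∞) ψ) :
    pd 0 (fun y => (pd2 0 1 v y * pd 1 v y - pd2 1 1 v y * pd 0 v y) * ψ y) x
      + pd 1 (fun y => (pd2 1 0 v y * pd 0 v y - pd2 0 0 v y * pd 1 v y) * ψ y) x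
    = 2 * (-detHess v x * ψ x)
        + (hessGradDot v ψ x - lap v x * gradDot v ψ x) := by
  have hvx : ContDiffAt ℝ (⊤:ℕ∞) v x := hev.self_of_nhds
  have s0 := contDiffAt_pd hvx 0
  have s1 := contDiffAt_pd hvx 1
  have d0 := diffAt_of_smoothAt s0
  have d1 := diffAt_of_smoothAt s1
  have dij : ∀ i j : Fin 2, DifferentiableAt ℝ (pd2 i j v) x := fun i j =>
    diffAt_of_smoothAt (contDiffAt_pd (contDiffAt_pd hvx j) i)
  have dψ : DifferentiableAt ℝ ψ x := diffAt_of_smoothAt hψ.contDiffAt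
  rw [pd_comb_sub 0 (dij 0 1) d1 (dij 1 1) d0 dψ, pd_comb_sub 1 (dij 1 0) d0 (dij 0 0) d1 dψ]
  have hsym01 : ∀ᶠ y in 𝓝 x, pd2 0 1 v y = pd2 1 0 v y :=
    hev.mono (fun y hy => pd2_symm hy 0 1)
  have T1 : pd 0 (pd2 0 1 v) x = pd 1 (pd2 0 0 v) x := by
    have h1 : pd 0 (pd2 0 1 v) x = pd 0 (pd2 1 0 v) x := pd_congr hsym01 0
    rw [h1]; exact pd2_symm s0 0 1
  have T2 : pd 1 (pd2 1 0 v) x = pd 0 (pd2 1 1 v) x := by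
    have h1 : pd 1 (pd2 1 0 v) x = pd 1 (pd2 0 1 v) x :=
      pd_congr (hsym01.mono (fun y hy => hy.symm)) 1
    rw [h1]; exact pd2_symm s1 1 0
  rw [T1, T2]
  simp only [detHess, hessGradDot, lap, gradDot, pd2]
  rw [show pd 0 (pd 1 v) x = pd 1 (pd 0 v) x from pd2_symm hvx 0 1]
  ring

lemma div2 {v ψ : E2 → ℝ} {x : E2} (hvx : ContDiffAt ℝ (⊤:ℕ∞) v x)
    (hψ : ContDiff ℝ (⊤:ℕ∞) ψ) :
    pd 0 (fun y => (pd 0 v y * pd 0 v y + pd 1 v y * pd 1 v y) * pd 0 ψ y) x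
      + pd 1 (fun y => (pd 0 v y * pd 0 v y + pd 1 v y * pd 1 v y) * pd 1 ψ y) x
    = 2 * hessGradDot v ψ x + gradSq v x * lap ψ x := by
  have d0 := diffAt_of_smoothAt (contDiffAt_pd hvx 0)
  have d1 := diffAt_of_smoothAt (contDiffAt_pd hvx 1)
  have dψi : ∀ i : Fin 2, DifferentiableAt ℝ (pd i ψ) x := fun i =>
    diffAt_of_smoothAt (contDiffAt_pd hψ.contDiffAt i)
  rw [pd_comb_add 0 d0 d0 d1 d1 (dψi 0), pd_comb_add 1 d0 d0 d1 d1 (dψi 1)]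
  simp only [hessGradDot, gradSq, lap, pd2]
  ring

lemma div3 {v ψ : E2 → ℝ} {x : E2} (hvx : ContDiffAt ℝ (⊤:ℕ∞) v x)
    (hψ : ContDiff ℝ (⊤:ℕ∞) ψ) :
    pd 0 (fun y => pd 0 v y * (pd 0 v y * pd 0 ψ y + pd 1 v y * pd 1 ψ y)) x
      + pd 1 (fun y => pd 1 v y * (pd 0 v y * pd 0 ψ y + pd 1 v y * pd 1 ψ y)) x
    = lap v x * gradDot v ψ x + hessGradDot v ψ x + hessQuad ψ v x := by
  have d0 := diffAt_of_smoothAt (contDiffAt_pd hvx 0)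
  have d1 := diffAt_of_smoothAt (contDiffAt_pd hvx 1)
  have dψi : ∀ i : Fin 2, DifferentiableAt ℝ (pd i ψ) x := fun i =>
    diffAt_of_smoothAt (contDiffAt_pd hψ.contDiffAt i)
  rw [pd_comb_mul_add 0 d0 d0 (dψi 0) d1 (dψi 1),
      pd_comb_mul_add 1 d1 d0 (dψi 0) d1 (dψi 1)]
  simp only [lap, gradDot, hessGradDot, hessQuad, pd2]
  rw [show pd 0 (pd 1 v) x = pd 1 (pd 0 v) x from pd2_symm hvx 0 1]
  ring

/-- integration-by-parts formulae for −det D²v against a test function. -/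
theorem stmt_2 (Ω : Set E2) (hΩ : IsOpen Ω) (v : E2 → ℝ)
    (hv : ContDiffOn ℝ (⊤ : ℕ∞) v Ω) (ψ : E2 → ℝ) (hψ : IsTestOn ψ Ω) :
    ((∫ x in Ω, (-detHess v x) * ψ x)
        = -(1/2) * ∫ x in Ω, (hessGradDot v ψ x - lap v x * gradDot v ψ x)) ∧
    ((∫ x in Ω, (-detHess v x) * ψ x)
        = (1/2) * ∫ x in Ω, (gradSq v x * lap ψ x - hessQuad ψ v x)) := by
  obtain ⟨hψs, hψcs, hKΩ⟩ := hψ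
  have hKc : IsCompact (tsupport ψ) := hψcs
  have hKcl : IsClosed (tsupport ψ) := isClosed_tsupport ψ
  have hψ0 : ∀ x, x ∉ tsupport ψ → ψ x = 0 := fun x hx => image_eq_zero_of_notMem_tsupport hx
  have hOpenC : ∀ x, x ∉ tsupport ψ → (tsupport ψ)ᶜ ∈ 𝓝 x := fun x hx =>
    hKcl.isOpen_compl.mem_nhds hx
  have hpdψ0 : ∀ (i : Fin 2) (x : E2), x ∉ tsupport ψ → pd i ψ x = 0 := by
    intro i x hx
    exact pd_eventually_zero (eventually_of_mem (hOpenC x hx) (fun y hy => hψ0 y hy)) i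
  have hpd2ψ0 : ∀ (i j : Fin 2) (x : E2), x ∉ tsupport ψ → pd2 i j ψ x = 0 := by
    intro i j x hx
    exact pd_eventually_zero (eventually_of_mem (hOpenC x hx) (fun y hy => hpdψ0 j y hy)) i
  have hvA : ∀ y ∈ Ω, ContDiffAt ℝ (⊤:ℕ∞) v y := fun y hy => hv.contDiffAt (hΩ.mem_nhds hy)
  have hnotΩ : ∀ x, x ∉ Ω → x ∉ tsupport ψ := fun x hx hk => hx (hKΩ hk)
  have sv : ∀ x ∈ Ω, ∀ i : Fin 2, ContDiffAt ℝ (⊤:ℕ∞) (pd i v) x := fun x hx i =>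
    contDiffAt_pd (hvA x hx) i
  have sv2 : ∀ x ∈ Ω, ∀ i j : Fin 2, ContDiffAt ℝ (⊤:ℕ∞) (pd2 i j v) x := fun x hx i j =>
    contDiffAt_pd (contDiffAt_pd (hvA x hx) j) i
  have sψ : ∀ (x : E2) (i : Fin 2), ContDiffAt ℝ (⊤:ℕ∞) (pd i ψ) x := fun x i =>
    contDiffAt_pd hψs.contDiffAt i
  have sψ2 : ∀ (x : E2) (i j : Fin 2), ContDiffAt ℝ (⊤:ℕ∞) (pd2 i j ψ) x := fun x i j =>
    contDiffAt_pd (contDiffAt_pd hψs.contDiffAt j) i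
  have master : ∀ (Y : E2 → ℝ), (∀ x ∈ Ω, ContDiffAt ℝ (⊤:ℕ∞) Y x) →
      (∀ x, x ∉ tsupport ψ → Y x = 0) →
      ∀ i : Fin 2, (∫ x, pd i Y x) = 0 ∧ Integrable (fun x => pd i Y x) volume := by
    intro Y hsm h0 i
    have hC : ContDiff ℝ (⊤:ℕ∞) Y := contDiff_glue hKcl hKΩ hsm h0
    have hS : HasCompactSupport Y := HasCompactSupport.intro hKc h0
    refine ⟨integral_pd_eq_zero hC hS i, ?_⟩
    apply Continuous.integrable_of_hasCompactSupport
    · exact continuous_iff_continuousAt.2 (fun x => (contDiffAt_pd hC.contDiffAt i).continuousAt)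
    · exact HasCompactSupport.intro hKc
        (fun x hx => pd_eventually_zero (eventually_of_mem (hOpenC x hx) h0) i)
  have mkInt : ∀ (f : E2 → ℝ), (∀ x ∈ Ω, ContDiffAt ℝ (⊤:ℕ∞) f x) →
      (∀ x, x ∉ tsupport ψ → f x = 0) → Integrable f volume := fun f h1 h0 =>
    (contDiff_glue hKcl hKΩ h1 h0).continuous.integrable_of_hasCompactSupport
      (HasCompactSupport.intro hKc h0)
  -- the six divergence-component facts
  obtain ⟨hI10, hInt10⟩ := master
    (fun y => (pd2 0 1 v y * pd 1 v y - pd2 1 1 v y * pd 0 v y) * ψ y)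
    (fun x hx => (((sv2 x hx 0 1).mul (sv x hx 1)).sub
      ((sv2 x hx 1 1).mul (sv x hx 0))).mul hψs.contDiffAt)
    (fun x hx => by simp [hψ0 x hx]) 0
  obtain ⟨hI11, hInt11⟩ := master
    (fun y => (pd2 1 0 v y * pd 0 v y - pd2 0 0 v y * pd 1 v y) * ψ y)
    (fun x hx => (((sv2 x hx 1 0).mul (sv x hx 0)).sub
      ((sv2 x hx 0 0).mul (sv x hx 1))).mul hψs.contDiffAt)
    (fun x hx => by simp [hψ0 x hx]) 1
  obtain ⟨hI20, hInt20⟩ := master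
    (fun y => (pd 0 v y * pd 0 v y + pd 1 v y * pd 1 v y) * pd 0 ψ y)
    (fun x hx => (((sv x hx 0).mul (sv x hx 0)).add ((sv x hx 1).mul (sv x hx 1))).mul (sψ x 0))
    (fun x hx => by simp [hpdψ0 0 x hx]) 0
  obtain ⟨hI21, hInt21⟩ := master
    (fun y => (pd 0 v y * pd 0 v y + pd 1 v y * pd 1 v y) * pd 1 ψ y)
    (fun x hx => (((sv x hx 0).mul (sv x hx 0)).add ((sv x hx 1).mul (sv x hx 1))).mul (sψ x 1))
    (fun x hx => by simp [hpdψ0 1 x hx]) 1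
  obtain ⟨hI30, hInt30⟩ := master
    (fun y => pd 0 v y * (pd 0 v y * pd 0 ψ y + pd 1 v y * pd 1 ψ y))
    (fun x hx => (sv x hx 0).mul
      (((sv x hx 0).mul (sψ x 0)).add ((sv x hx 1).mul (sψ x 1))))
    (fun x hx => by simp [hpdψ0 0 x hx, hpdψ0 1 x hx]) 0
  obtain ⟨hI31, hInt31⟩ := master
    (fun y => pd 1 v y * (pd 0 v y * pd 0 ψ y + pd 1 v y * pd 1 ψ y))
    (fun x hx => (sv x hx 1).mul
      (((sv x hx 0).mul (sψ x 0)).add ((sv x hx 1).mul (sψ x 1))))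
    (fun x hx => by simp [hpdψ0 0 x hx, hpdψ0 1 x hx]) 1
  -- pointwise divergence identities (valid everywhere)
  have hpt1 : ∀ x : E2,
      pd 0 (fun y => (pd2 0 1 v y * pd 1 v y - pd2 1 1 v y * pd 0 v y) * ψ y) x
        + pd 1 (fun y => (pd2 1 0 v y * pd 0 v y - pd2 0 0 v y * pd 1 v y) * ψ y) x
      = 2 * (-detHess v x * ψ x) + (hessGradDot v ψ x - lap v x * gradDot v ψ x) := by
    intro x
    by_cases hx : x ∈ Ω
    · exact div1 (eventually_of_mem (hΩ.mem_nhds hx) hvA) hψs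
    · have hxK := hnotΩ x hx
      rw [pd_eventually_zero (eventually_of_mem (hOpenC x hxK)
            (fun y hy => by rw [hψ0 y hy, mul_zero])) 0,
          pd_eventually_zero (eventually_of_mem (hOpenC x hxK)
            (fun y hy => by rw [hψ0 y hy, mul_zero])) 1]
      simp [hessGradDot, gradDot, hψ0 x hxK, hpdψ0 0 x hxK, hpdψ0 1 x hxK]
  have hpt2 : ∀ x : E2,
      pd 0 (fun y => (pd 0 v y * pd 0 v y + pd 1 v y * pd 1 v y) * pd 0 ψ y) x
        + pd 1 (fun y => (pd 0 v y * pd 0 v y + pd 1 v y * pd 1 v y) * pd 1 ψ y) x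
      = 2 * hessGradDot v ψ x + gradSq v x * lap ψ x := by
    intro x
    by_cases hx : x ∈ Ω
    · exact div2 (hvA x hx) hψs
    · have hxK := hnotΩ x hx
      rw [pd_eventually_zero (eventually_of_mem (hOpenC x hxK)
            (fun y hy => by rw [hpdψ0 0 y hy, mul_zero])) 0,
          pd_eventually_zero (eventually_of_mem (hOpenC x hxK)
            (fun y hy => by rw [hpdψ0 1 y hy, mul_zero])) 1]
      simp [hessGradDot, lap, hpdψ0 0 x hxK, hpdψ0 1 x hxK,
        hpd2ψ0 0 0 x hxK, hpd2ψ0 1 1 x hxK]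
  have hpt3 : ∀ x : E2,
      pd 0 (fun y => pd 0 v y * (pd 0 v y * pd 0 ψ y + pd 1 v y * pd 1 ψ y)) x
        + pd 1 (fun y => pd 1 v y * (pd 0 v y * pd 0 ψ y + pd 1 v y * pd 1 ψ y)) x
      = lap v x * gradDot v ψ x + hessGradDot v ψ x + hessQuad ψ v x := by
    intro x
    by_cases hx : x ∈ Ω
    · exact div3 (hvA x hx) hψs
    · have hxK := hnotΩ x hx
      rw [pd_eventually_zero (eventually_of_mem (hOpenC x hxK)
            (fun y hy => by simp [hpdψ0 0 y hy, hpdψ0 1 y hy])) 0,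
          pd_eventually_zero (eventually_of_mem (hOpenC x hxK)
            (fun y hy => by simp [hpdψ0 0 y hy, hpdψ0 1 y hy])) 1]
      simp [hessGradDot, gradDot, hessQuad, hpdψ0 0 x hxK, hpdψ0 1 x hxK,
        hpd2ψ0 0 0 x hxK, hpd2ψ0 0 1 x hxK, hpd2ψ0 1 0 x hxK, hpd2ψ0 1 1 x hxK]
  -- integrability of the scalar integrands
  have intF1 : Integrable (fun x => -detHess v x * ψ x) volume := mkInt _
    (fun x hx => ((((sv2 x hx 0 0).mul (sv2 x hx 1 1)).sub
      ((sv2 x hx 0 1).mul (sv2 x hx 1 0))).neg).mul hψs.contDiffAt)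
    (fun x hx => by rw [hψ0 x hx, mul_zero])
  have intB : Integrable (fun x => hessGradDot v ψ x) volume := mkInt _
    (fun x hx => ((((sv2 x hx 0 0).mul (sv x hx 0)).add
      ((sv2 x hx 0 1).mul (sv x hx 1))).mul (sψ x 0)).add
      ((((sv2 x hx 1 0).mul (sv x hx 0)).add ((sv2 x hx 1 1).mul (sv x hx 1))).mul (sψ x 1)))
    (fun x hx => by simp [hessGradDot, hpdψ0 0 x hx, hpdψ0 1 x hx])
  have intC : Integrable (fun x => lap v x * gradDot v ψ x) volume := mkInt _
    (fun x hx => ((sv2 x hx 0 0).add (sv2 x hx 1 1)).mul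
      (((sv x hx 0).mul (sψ x 0)).add ((sv x hx 1).mul (sψ x 1))))
    (fun x hx => by simp [gradDot, hpdψ0 0 x hx, hpdψ0 1 x hx])
  have intD : Integrable (fun x => hessQuad ψ v x) volume := mkInt _
    (fun x hx => (((((sψ2 x 0 0).mul (sv x hx 0)).mul (sv x hx 0)).add
      (((sψ2 x 0 1).mul (sv x hx 0)).mul (sv x hx 1))).add
      (((sψ2 x 1 0).mul (sv x hx 1)).mul (sv x hx 0))).add
      (((sψ2 x 1 1).mul (sv x hx 1)).mul (sv x hx 1)))
    (fun x hx => by simp [hessQuad, hpd2ψ0 0 0 x hx, hpd2ψ0 0 1 x hx,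
      hpd2ψ0 1 0 x hx, hpd2ψ0 1 1 x hx])
  have intE : Integrable (fun x => gradSq v x * lap ψ x) volume := mkInt _
    (fun x hx => (((sv x hx 0).pow 2).add ((sv x hx 1).pow 2)).mul
      ((sψ2 x 0 0).add (sψ2 x 1 1)))
    (fun x hx => by simp [lap, hpd2ψ0 0 0 x hx, hpd2ψ0 1 1 x hx])
  -- the three integral relations
  have E1 : 2 * (∫ x, -detHess v x * ψ x)
      + ((∫ x, hessGradDot v ψ x) - ∫ x, lap v x * gradDot v ψ x) = 0 := by
    have i1 : Integrable (fun x => 2 * (-detHess v x * ψ x)) volume := intF1.const_mul 2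
    have iBC : Integrable (fun x => hessGradDot v ψ x - lap v x * gradDot v ψ x) volume :=
      intB.sub intC
    have h1 : (∫ x, (2 * (-detHess v x * ψ x)
        + (hessGradDot v ψ x - lap v x * gradDot v ψ x)))
        = 2 * (∫ x, -detHess v x * ψ x)
          + ((∫ x, hessGradDot v ψ x) - ∫ x, lap v x * gradDot v ψ x) := by
      rw [integral_add i1 iBC, integral_const_mul 2 _, integral_sub intB intC]
    rw [← h1, ← integral_congr_ae (ae_of_all _ hpt1),
      integral_add hInt10 hInt11, hI10, hI11, add_zero]
  have E2 : 2 * (∫ x, hessGradDot v ψ x) + (∫ x, gradSq v x * lap ψ x) = 0 := by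
    have h1 : (∫ x, (2 * hessGradDot v ψ x + gradSq v x * lap ψ x))
        = 2 * (∫ x, hessGradDot v ψ x) + (∫ x, gradSq v x * lap ψ x) := by
      have i2 : Integrable (fun x => 2 * hessGradDot v ψ x) volume := intB.const_mul 2
      rw [integral_add i2 intE, integral_const_mul 2 _]
    rw [← h1, ← integral_congr_ae (ae_of_all _ hpt2),
      integral_add hInt20 hInt21, hI20, hI21, add_zero]
  have E3 : (∫ x, lap v x * gradDot v ψ x) + (∫ x, hessGradDot v ψ x)
      + (∫ x, hessQuad ψ v x) = 0 := by
    have h1 : (∫ x, (lap v x * gradDot v ψ x + hessGradDot v ψ x + hessQuad ψ v x))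
        = (∫ x, lap v x * gradDot v ψ x) + (∫ x, hessGradDot v ψ x)
          + (∫ x, hessQuad ψ v x) := by
      have iCB : Integrable (fun x => lap v x * gradDot v ψ x + hessGradDot v ψ x) volume :=
        intC.add intB
      rw [integral_add iCB intD, integral_add intC intB]
    rw [← h1, ← integral_congr_ae (ae_of_all _ hpt3),
      integral_add hInt30 hInt31, hI30, hI31, add_zero]
  -- pass from set integrals over Ω to integrals over the plane
  have S1 : (∫ x in Ω, (-detHess v x) * ψ x) = ∫ x, -detHess v x * ψ x :=
    setIntegral_eq_integral_of_forall_compl_eq_zero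
      (fun x hx => by rw [hψ0 x (hnotΩ x hx), mul_zero])
  have S2 : (∫ x in Ω, (hessGradDot v ψ x - lap v x * gradDot v ψ x))
      = ∫ x, (hessGradDot v ψ x - lap v x * gradDot v ψ x) :=
    setIntegral_eq_integral_of_forall_compl_eq_zero
      (fun x hx => by simp [hessGradDot, gradDot, hpdψ0 0 x (hnotΩ x hx),
        hpdψ0 1 x (hnotΩ x hx)])
  have S3 : (∫ x in Ω, (gradSq v x * lap ψ x - hessQuad ψ v x))
      = ∫ x, (gradSq v x * lap ψ x - hessQuad ψ v x) :=
    setIntegral_eq_integral_of_forall_compl_eq_zero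
      (fun x hx => by simp [lap, hessQuad, hpd2ψ0 0 0 x (hnotΩ x hx),
        hpd2ψ0 0 1 x (hnotΩ x hx), hpd2ψ0 1 0 x (hnotΩ x hx), hpd2ψ0 1 1 x (hnotΩ x hx)])
  constructor
  · rw [S1, S2, integral_sub intB intC]
    linarith [E1]
  · rw [S1, S3, integral_sub intE intD]
    linarith [E1, E2, E3]
end
end

section
/- Let Ω ⊆ ℝ² be open, v ∈ C^∞(Ω), β > −1, ε > 0, and ψ ∈ C_c^∞(Ω). Then ∫_Ω −det D[(|Dv|² + ε)^{β/2} Dv] ψ dx = −(1/2) ∫_Ω (|Dv|² + ε)^{β} (D²ψ Dv · Dv) dx + (1/(2β+2)) ∫_Ω (|Dv|² + ε)^{β+1} Δψ dx − (β/(β+1)) ∫_Ω (|Dv|² + ε)^{(β−1)/2} [D((|Dv|² + ε)^{(β+1)/2}) · Dv] (Dv · Dψ) dx. -/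
open Real MeasureTheory
open scoped RealInnerProductSpace

noncomputable section

/-!
Put `A = |Dv|² + ε` and `F = A^{β/2} Dv`. In the plane the Jacobian determinant is a null
Lagrangian: `-det DF = div Φ[F]` for `Φ[F] = ½ (F₁ ∂₁F₀ - F₀ ∂₁F₁, F₀ ∂₀F₁ - F₁ ∂₀F₀)`.
Since `F` is a scalar multiple of `Dv`, the derivatives of the scalar cancel in `Φ`, and
`Φ[F] = A^β Φ[Dv] = ½ A^β (D²v Dv - Δv Dv)`. Adding `R = ½ A^β (Dv · Dψ) Dv - A^{β+1} Dψ / (2β + 2)`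
to `Φ[F] ψ` gives a field supported in `supp ψ` whose divergence is, pointwise, the integrand on
the left minus the integrands on the right; the integral of that divergence vanishes. The last
term enters through `β A^{(β-1)/2} D(A^{(β+1)/2}) = ((β + 1)/2) D(A^β)`.
-/

section PartialDerivatives

variable {f g : E2 → ℝ} {x : E2} {i j : Fin 2}

theorem pd_fun_add (hf : DifferentiableAt ℝ f x) (hg : DifferentiableAt ℝ g x) :
    pd i (fun y => f y + g y) x = pd i f x + pd i g x := by
  simp [pd, fderiv_fun_add hf hg]

theorem pd_fun_sub (hf : DifferentiableAt ℝ f x) (hg : DifferentiableAt ℝ g x) :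
    pd i (fun y => f y - g y) x = pd i f x - pd i g x := by
  simp [pd, fderiv_fun_sub hf hg]

theorem pd_fun_mul (hf : DifferentiableAt ℝ f x) (hg : DifferentiableAt ℝ g x) :
    pd i (fun y => f y * g y) x = pd i f x * g x + f x * pd i g x := by
  simp [pd, fderiv_fun_mul hf hg]
  ring

theorem pd_fun_pow (hf : DifferentiableAt ℝ f x) (n : ℕ) :
    pd i (fun y => f y ^ n) x = n * f x ^ (n - 1) * pd i f x := by
  simp [pd, fderiv_fun_pow n hf]

theorem pd_div_const (hf : DifferentiableAt ℝ f x) (c : ℝ) :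
    pd i (fun y => f y / c) x = pd i f x / c := by
  simp [pd, div_eq_mul_inv, fderiv_mul_const hf, mul_comm]

theorem pd_add_const (c : ℝ) : pd i (fun y => f y + c) x = pd i f x := by
  simp [pd]

theorem pd_rpow_const (hf : DifferentiableAt ℝ f x) (hx : f x ≠ 0) (p : ℝ) :
    pd i (fun y => f y ^ p) x = p * f x ^ (p - 1) * pd i f x := by
  simp [pd, (hf.hasFDerivAt.rpow_const (p := p) (Or.inl hx)).fderiv]

theorem ContDiffAt.pd {m n : WithTop ℕ∞} (hf : ContDiffAt ℝ n f x) (hmn : m + 1 ≤ n)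
    (i : Fin 2) : ContDiffAt ℝ m (pd i f) x :=
  (hf.fderiv_right hmn).clm_apply contDiffAt_const

theorem pd_comm (hf : ContDiffAt ℝ 2 f x) : pd i (pd j f) x = pd j (pd i f) x := by
  have hdf : DifferentiableAt ℝ (fderiv ℝ f) x :=
    (hf.fderiv_right (m := 1) le_rfl).differentiableAt one_ne_zero
  have hsecond k l : pd k (pd l f) x = fderiv ℝ (fderiv ℝ f) x (ee k) (ee l) := by
    change fderiv ℝ (fun y => fderiv ℝ f y (ee l)) x (ee k) = _
    simp [fderiv_clm_apply hdf (differentiableAt_const _)]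
  rw [hsecond, hsecond, hf.isSymmSndFDerivAt (by simp)]

theorem tsupport_pd_subset : tsupport (pd i f) ⊆ tsupport f :=
  tsupport_fderiv_apply_subset ℝ (ee i)

theorem pd_eq_zero_of_notMem_tsupport (h : x ∉ tsupport f) : pd i f x = 0 := by
  simp [pd, fderiv_of_notMem_tsupport ℝ h]

end PartialDerivatives

section Integration

variable {E : Type*} [NormedAddCommGroup E] [NormedSpace ℝ E]

theorem contDiff_of_contDiffAt_of_eq_zero {F : Type*} [NormedAddCommGroup F] [NormedSpace ℝ F]
    {Ω K : Set E} {G : E → F} {n : WithTop ℕ∞} (hK : IsClosed K) (hKΩ : K ⊆ Ω)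
    (hG : ∀ x ∈ Ω, ContDiffAt ℝ n G x) (hG0 : ∀ x ∉ K, G x = 0) : ContDiff ℝ n G := by
  refine contDiff_iff_contDiffAt.2 fun x => ?_
  by_cases hx : x ∈ Ω
  · exact hG x hx
  · refine (contDiffAt_const (c := (0 : F))).congr_of_eventuallyEq ?_
    filter_upwards [hK.isOpen_compl.mem_nhds fun h => hx (hKΩ h)] with y hy using hG0 y hy

variable [MeasurableSpace E] [BorelSpace E] [FiniteDimensional ℝ E] {μ : Measure E}
  [μ.IsAddHaarMeasure]

theorem integral_fderiv_apply_eq_zero {G : E → ℝ} (hG : ContDiff ℝ 1 G) (hc : HasCompactSupport G)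
    (v : E) : ∫ x, fderiv ℝ G x v ∂μ = 0 := by
  have hG' : Integrable (fun x => fderiv ℝ G x v) μ :=
    ((hG.continuous_fderiv one_ne_zero).clm_apply continuous_const).integrable_of_hasCompactSupport
      (hc.fderiv_apply ℝ v)
  have hibp := integral_mul_fderiv_eq_neg_fderiv_mul_of_integrable (μ := μ) (v := v)
    (f := fun _ => (1 : ℝ)) (g := G) (by simp) (by simpa using hG')
    (by simpa using hG.continuous.integrable_of_hasCompactSupport hc)
    (fun _ _ => differentiableAt_const _) (fun x _ => hG.differentiable one_ne_zero x)
  simpa using hibp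

end Integration

section Divergence

variable {F G H : Fin 2 → E2 → ℝ} {ψ : E2 → ℝ} {x : E2} {n : WithTop ℕ∞}

def divergence (G : Fin 2 → E2 → ℝ) (x : E2) : ℝ := pd 0 (G 0) x + pd 1 (G 1) x

theorem setIntegral_divergence_eq_zero {Ω K : Set E2} (hK : IsCompact K)
    (hKΩ : K ⊆ Ω) (hG : ∀ i, ∀ x ∈ Ω, ContDiffAt ℝ 1 (G i) x) (hG0 : ∀ i, ∀ x ∉ K, G i x = 0) :
    ∫ x in Ω, divergence G x = 0 := by
  have hsmooth i : ContDiff ℝ 1 (G i) :=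
    contDiff_of_contDiffAt_of_eq_zero hK.isClosed hKΩ (hG i) (hG0 i)
  have hsupp i : HasCompactSupport (G i) := HasCompactSupport.intro hK (hG0 i)
  have hint i : Integrable (pd i (G i)) :=
    (((hsmooth i).continuous_fderiv one_ne_zero).clm_apply
      continuous_const).integrable_of_hasCompactSupport ((hsupp i).fderiv_apply ℝ _)
  have htsupp i : tsupport (G i) ⊆ K :=
    closure_minimal (fun x hx => by_contra fun h => hx (hG0 i x h)) hK.isClosed
  rw [setIntegral_eq_integral_of_forall_compl_eq_zero fun x hx => ?_]
  · unfold divergence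
    rw [integral_add (hint 0) (hint 1)]
    simp only [pd, integral_fderiv_apply_eq_zero (hsmooth _) (hsupp _), add_zero]
  · have hxK : x ∉ K := fun h => hx (hKΩ h)
    simp [divergence, pd_eq_zero_of_notMem_tsupport fun h => hxK (htsupp _ h)]

theorem divergence_add (hG : ∀ i, DifferentiableAt ℝ (G i) x)
    (hH : ∀ i, DifferentiableAt ℝ (H i) x) :
    divergence (fun i y => G i y + H i y) x = divergence G x + divergence H x := by
  simp only [divergence, pd_fun_add (hG _) (hH _)]
  ring

theorem divergence_mul (hG : ∀ i, DifferentiableAt ℝ (G i) x) (hψ : DifferentiableAt ℝ ψ x) :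
    divergence (fun i y => G i y * ψ y) x
      = divergence G x * ψ x + (G 0 x * pd 0 ψ x + G 1 x * pd 1 ψ x) := by
  simp only [divergence, pd_fun_mul (hG _) hψ]
  ring

def jdetFlux (F : Fin 2 → E2 → ℝ) : Fin 2 → E2 → ℝ :=
  ![fun y => (F 1 y * pd 1 (F 0) y - F 0 y * pd 1 (F 1) y) / 2,
    fun y => (F 0 y * pd 0 (F 1) y - F 1 y * pd 0 (F 0) y) / 2]

theorem contDiffAt_jdetFlux (hF : ∀ i, ContDiffAt ℝ (n + 1) (F i) x) (i : Fin 2) :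
    ContDiffAt ℝ n (jdetFlux F i) x := by
  have := fun i => (hF i).of_le le_self_add
  have := fun i j => (hF i).pd le_rfl j
  revert i
  refine Fin.forall_fin_two.2 ⟨?_, ?_⟩ <;>
    simp only [jdetFlux, Matrix.cons_val_zero, Matrix.cons_val_one] <;> fun_prop

theorem divergence_jdetFlux (hF : ∀ i, ContDiffAt ℝ 2 (F i) x) :
    divergence (jdetFlux F) x = -jdet F x := by
  have hd i : DifferentiableAt ℝ (F i) x := (hF i).differentiableAt (by norm_num)
  have hd' i j : DifferentiableAt ℝ (pd j (F i)) x :=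
    ((hF i).pd (m := 1) (by norm_num) j).differentiableAt (by norm_num)
  simp only [divergence, jdetFlux, Matrix.cons_val_zero, Matrix.cons_val_one]
  simp (disch := fun_prop) only [pd_div_const, pd_fun_sub, pd_fun_mul]
  rw [pd_comm (hF 0) (i := 0) (j := 1), pd_comm (hF 1) (i := 0) (j := 1), jdet]
  ring

theorem jdetFlux_mul {a : E2 → ℝ} {g : Fin 2 → E2 → ℝ} (ha : DifferentiableAt ℝ a x)
    (hg : ∀ i, DifferentiableAt ℝ (g i) x) (i : Fin 2) :
    jdetFlux (fun i y => a y * g i y) i x = a x ^ 2 * jdetFlux g i x := by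
  fin_cases i <;> simp [jdetFlux, pd_fun_mul ha (hg _)] <;> ring

end Divergence

section GradientCalculus

variable {v ψ f : E2 → ℝ} {x : E2} {n : WithTop ℕ∞} {ε : ℝ}

theorem gradSq_add_pos (hε : 0 < ε) : 0 < gradSq v x + ε := by
  unfold gradSq
  positivity

theorem contDiffAt_gradSq (hv : ContDiffAt ℝ (n + 1) v x) : ContDiffAt ℝ n (gradSq v) x := by
  have := hv.pd le_rfl
  unfold gradSq
  fun_prop

theorem contDiffAt_gradSq_add_rpow (hv : ContDiffAt ℝ (n + 1) v x) (hε : 0 < ε) (p : ℝ) :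
    ContDiffAt ℝ n (fun y => (gradSq v y + ε) ^ p) x :=
  ((contDiffAt_gradSq hv).add contDiffAt_const).rpow_const_of_ne (gradSq_add_pos hε).ne'

theorem pd_gradSq (hv : ContDiffAt ℝ 2 v x) (i : Fin 2) :
    pd i (gradSq v) x = 2 * pd 0 v x * pd i (pd 0 v) x + 2 * pd 1 v x * pd i (pd 1 v) x := by
  have hd j : DifferentiableAt ℝ (pd j v) x :=
    (hv.pd (m := 1) (by norm_num) j).differentiableAt (by norm_num)
  unfold gradSq
  simp (disch := fun_prop) only [pd_fun_add, pd_fun_pow]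
  ring

theorem pd_gradDot (hv : ContDiffAt ℝ 2 v x) (hψ : ContDiffAt ℝ 2 ψ x) (i : Fin 2) :
    pd i (gradDot v ψ) x = pd i (pd 0 v) x * pd 0 ψ x + pd 0 v x * pd i (pd 0 ψ) x
      + (pd i (pd 1 v) x * pd 1 ψ x + pd 1 v x * pd i (pd 1 ψ) x) := by
  have hdv j : DifferentiableAt ℝ (pd j v) x :=
    (hv.pd (m := 1) (by norm_num) j).differentiableAt (by norm_num)
  have hdψ j : DifferentiableAt ℝ (pd j ψ) x :=
    (hψ.pd (m := 1) (by norm_num) j).differentiableAt (by norm_num)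
  unfold gradDot
  simp (disch := fun_prop) only [pd_fun_add, pd_fun_mul]

theorem jdetFlux_grad_dot_grad (hv : ContDiffAt ℝ 2 v x) :
    jdetFlux (fun i => pd i v) 0 x * pd 0 ψ x + jdetFlux (fun i => pd i v) 1 x * pd 1 ψ x
      = (hessGradDot v ψ x - lap v x * gradDot v ψ x) / 2 := by
  simp only [jdetFlux, Matrix.cons_val_zero, Matrix.cons_val_one, hessGradDot, lap, gradDot, pd2,
    pd_comm hv (i := 0) (j := 1)]
  ring

theorem mul_pd_rpow_of_add_eq (hf : DifferentiableAt ℝ f x) (hx : 0 < f x) {p q r : ℝ}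
    (hpqr : p + q = r) (i : Fin 2) :
    q * pd i (fun y => f y ^ r) x = r * (f x ^ p * pd i (fun y => f y ^ q) x) := by
  rw [pd_rpow_const hf hx.ne', pd_rpow_const hf hx.ne', ← hpqr, add_sub_assoc,
    Real.rpow_add hx]
  ring

end GradientCalculus

section Identity

variable {v ψ : E2 → ℝ} {x : E2} {n : WithTop ℕ∞} {β ε : ℝ}

def weightedGrad (v : E2 → ℝ) (β ε : ℝ) : Fin 2 → E2 → ℝ := fun i y =>
  (gradSq v y + ε) ^ (β / 2) * pd i v y

def correctionFlux (v ψ : E2 → ℝ) (β ε : ℝ) : Fin 2 → E2 → ℝ := fun i y =>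
  (gradSq v y + ε) ^ β * pd i v y * gradDot v ψ y / 2
    - (gradSq v y + ε) ^ (β + 1) * pd i ψ y / (2 * β + 2)

def detIdentityFlux (v ψ : E2 → ℝ) (β ε : ℝ) : Fin 2 → E2 → ℝ := fun i y =>
  jdetFlux (weightedGrad v β ε) i y * ψ y + correctionFlux v ψ β ε i y

theorem contDiffAt_weightedGrad (hv : ContDiffAt ℝ (n + 1) v x) (hε : 0 < ε) (i : Fin 2) :
    ContDiffAt ℝ n (weightedGrad v β ε i) x :=
  (contDiffAt_gradSq_add_rpow hv hε _).mul (hv.pd le_rfl i)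

theorem contDiffAt_correctionFlux (hv : ContDiffAt ℝ (n + 1) v x)
    (hψ : ContDiffAt ℝ (n + 1) ψ x) (hε : 0 < ε) (i : Fin 2) :
    ContDiffAt ℝ n (correctionFlux v ψ β ε i) x := by
  have := contDiffAt_gradSq_add_rpow hv hε
  have := hv.pd le_rfl
  have := hψ.pd le_rfl
  unfold correctionFlux gradDot
  fun_prop

theorem divergence_correctionFlux (hv : ContDiffAt ℝ 2 v x) (hψ : ContDiffAt ℝ 2 ψ x)
    (hε : 0 < ε) (hβ : β + 1 ≠ 0) :
    divergence (correctionFlux v ψ β ε) x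
      = gradDot (fun y => (gradSq v y + ε) ^ β) v x * gradDot v ψ x / 2
        + (gradSq v x + ε) ^ β
            * (lap v x * gradDot v ψ x - hessGradDot v ψ x + hessQuad ψ v x) / 2
        - (gradSq v x + ε) ^ (β + 1) * lap ψ x / (2 * β + 2) := by
  have hA := gradSq_add_pos (v := v) (x := x) hε
  have hdv j : DifferentiableAt ℝ (pd j v) x :=
    (hv.pd (m := 1) (by norm_num) j).differentiableAt (by norm_num)
  have hdψ j : DifferentiableAt ℝ (pd j ψ) x :=
    (hψ.pd (m := 1) (by norm_num) j).differentiableAt (by norm_num)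
  have hdA : DifferentiableAt ℝ (fun y => gradSq v y + ε) x :=
    ((contDiffAt_gradSq (n := 1) hv).differentiableAt one_ne_zero).add_const ε
  have hdApow (p : ℝ) : DifferentiableAt ℝ (fun y => (gradSq v y + ε) ^ p) x :=
    hdA.rpow_const (Or.inl hA.ne')
  have hdG : DifferentiableAt ℝ (gradDot v ψ) x := by unfold gradDot; fun_prop
  unfold divergence correctionFlux
  simp (disch := fun_prop) only [pd_fun_sub, pd_div_const, pd_fun_mul]
  simp only [pd_gradDot hv hψ, pd_rpow_const hdA hA.ne', pd_add_const, pd_gradSq hv,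
    add_sub_cancel_right, gradDot, lap, hessGradDot, hessQuad, pd2, pd_comm hv (i := 0) (j := 1)]
  field_simp
  ring

theorem contDiffAt_detIdentityFlux (hv : ContDiffAt ℝ 3 v x) (hψ : ContDiffAt ℝ 2 ψ x)
    (hε : 0 < ε) (i : Fin 2) : ContDiffAt ℝ 1 (detIdentityFlux v ψ β ε i) x :=
  ((contDiffAt_jdetFlux (contDiffAt_weightedGrad hv hε) i).mul (hψ.of_le (by norm_num))).add
    (contDiffAt_correctionFlux (hv.of_le (by norm_num)) hψ hε i)

theorem detIdentityFlux_eq_zero_of_notMem_tsupport (hx : x ∉ tsupport ψ) (i : Fin 2) :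
    detIdentityFlux v ψ β ε i x = 0 := by
  simp [detIdentityFlux, correctionFlux, gradDot, image_eq_zero_of_notMem_tsupport hx,
    pd_eq_zero_of_notMem_tsupport hx]

theorem divergence_detIdentityFlux (hv : ContDiffAt ℝ 3 v x) (hψ : ContDiffAt ℝ 2 ψ x)
    (hε : 0 < ε) (hβ : β + 1 ≠ 0) :
    divergence (detIdentityFlux v ψ β ε) x
      = -jdet (weightedGrad v β ε) x * ψ x
        + 1 / 2 * ((gradSq v x + ε) ^ β * hessQuad ψ v x)
        - 1 / (2 * β + 2) * ((gradSq v x + ε) ^ (β + 1) * lap ψ x)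
        + β / (β + 1) * ((gradSq v x + ε) ^ ((β - 1) / 2)
            * gradDot (fun y => (gradSq v y + ε) ^ ((β + 1) / 2)) v x * gradDot v ψ x) := by
  have hA := gradSq_add_pos (v := v) (x := x) hε
  have hF : ∀ i, ContDiffAt ℝ 2 (weightedGrad v β ε i) x := contDiffAt_weightedGrad hv hε
  have hdA : DifferentiableAt ℝ (fun y => gradSq v y + ε) x :=
    ((contDiffAt_gradSq (n := 2) hv).differentiableAt (by norm_num)).add_const ε
  have hdψ : DifferentiableAt ℝ ψ x := hψ.differentiableAt (by norm_num)
  have hdflux i : DifferentiableAt ℝ (jdetFlux (weightedGrad v β ε) i) x :=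
    (contDiffAt_jdetFlux (n := 1) hF i).differentiableAt one_ne_zero
  have hjdetFlux i : jdetFlux (weightedGrad v β ε) i x
      = (gradSq v x + ε) ^ β * jdetFlux (fun i => pd i v) i x := by
    unfold weightedGrad
    rw [jdetFlux_mul (hdA.rpow_const (Or.inl hA.ne'))
      (fun j => (hv.pd (m := 2) (by norm_num) j).differentiableAt (by norm_num)),
      ← Real.rpow_natCast, ← Real.rpow_mul hA.le]
    norm_num
  have hpowβ i : pd i (fun y => (gradSq v y + ε) ^ β) x = 2 * β / (β + 1) *
      ((gradSq v x + ε) ^ ((β - 1) / 2) * pd i (fun y => (gradSq v y + ε) ^ ((β + 1) / 2)) x) := by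
    have h := mul_pd_rpow_of_add_eq (p := (β - 1) / 2) (q := (β + 1) / 2) hdA hA (by ring) i
    field_simp
    linear_combination 2 * h
  unfold detIdentityFlux
  rw [divergence_add (fun i => (hdflux i).fun_mul hdψ)
      (fun i => (contDiffAt_correctionFlux (n := 1) (hv.of_le (by norm_num)) hψ hε
        i).differentiableAt one_ne_zero),
    divergence_mul hdflux hdψ, divergence_jdetFlux hF, hjdetFlux, hjdetFlux, mul_assoc, mul_assoc,
    ← mul_add, jdetFlux_grad_dot_grad (hv.of_le (by norm_num)),
    divergence_correctionFlux (hv.of_le (by norm_num)) hψ hε hβ]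
  simp only [gradDot, hpowβ]
  field_simp
  ring

theorem IsTestOn.integrableOn {Ω : Set E2} (hψ : IsTestOn ψ Ω) {f : E2 → ℝ}
    (hf : ∀ x ∈ Ω, ContinuousAt f x) (hf0 : ∀ x ∉ tsupport ψ, f x = 0) : IntegrableOn f Ω :=
  (((continuousOn_of_forall_continuousAt fun x hx => hf x (hψ.2.2 hx)).integrableOn_compact
    hψ.2.1).integrable_of_forall_notMem_eq_zero hf0).integrableOn

theorem integrableOn_identity_terms {Ω : Set E2} (hv : ∀ x ∈ Ω, ContDiffAt ℝ 3 v x)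
    (hψ : IsTestOn ψ Ω) (hε : 0 < ε) :
    IntegrableOn (fun x => -jdet (weightedGrad v β ε) x * ψ x) Ω
      ∧ IntegrableOn (fun x => (gradSq v x + ε) ^ β * hessQuad ψ v x) Ω
      ∧ IntegrableOn (fun x => (gradSq v x + ε) ^ (β + 1) * lap ψ x) Ω
      ∧ IntegrableOn (fun x => (gradSq v x + ε) ^ ((β - 1) / 2)
          * gradDot (fun y => (gradSq v y + ε) ^ ((β + 1) / 2)) v x * gradDot v ψ x) Ω := by
  have hψ0 x (hx : x ∉ tsupport ψ) : ψ x = 0 := image_eq_zero_of_notMem_tsupport hx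
  have hDψ0 x (hx : x ∉ tsupport ψ) i : pd i ψ x = 0 := pd_eq_zero_of_notMem_tsupport hx
  have hD2ψ0 x (hx : x ∉ tsupport ψ) i j : pd i (pd j ψ) x = 0 :=
    pd_eq_zero_of_notMem_tsupport fun h => hx (tsupport_pd_subset h)
  have hψ2 x : ContDiffAt ℝ 2 ψ x := hψ.1.contDiffAt.of_le (WithTop.coe_le_coe.2 le_top)
  refine ⟨hψ.integrableOn (fun x hx => ?_) fun x hx => by simp [hψ0 x hx],
    hψ.integrableOn (fun x hx => ?_) fun x hx => by simp [hessQuad, pd2, hD2ψ0 x hx],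
    hψ.integrableOn (fun x hx => ?_) fun x hx => by simp [lap, pd2, hD2ψ0 x hx],
    hψ.integrableOn (fun x hx => ?_) fun x hx => by simp [gradDot, hDψ0 x hx]⟩
  all_goals
    have := contDiffAt_gradSq (n := 2) (hv x hx)
    have := fun p => (contDiffAt_gradSq_add_rpow (n := 2) (hv x hx) hε p).pd (m := 1) le_rfl
    have := fun i j =>
      (contDiffAt_weightedGrad (n := 2) (β := β) (hv x hx) hε i).pd (m := 1) le_rfl j
    have := (hv x hx).pd (m := 2) (by norm_num)
    have := (hψ2 x).pd (m := 1) le_rfl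
    have := fun j => ((hψ2 x).pd (m := 1) le_rfl j).pd (m := 0) le_rfl
    have := hψ.1.continuous
    simp only [jdet, hessQuad, lap, gradDot, pd2]
    fun_prop (disch := exact Or.inl (gradSq_add_pos hε).ne')

end Identity

/-- the distributional identity for −det D[(|Dv|²+ε)^{β/2}Dv]. -/
theorem stmt_5 (Ω : Set E2) (hΩ : IsOpen Ω) (v : E2 → ℝ)
    (hv : ContDiffOn ℝ (⊤ : ℕ∞) v Ω) (β : ℝ) (hβ : -1 < β) (ε : ℝ) (hε : 0 < ε)
    (ψ : E2 → ℝ) (hψ : IsTestOn ψ Ω) :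
    (∫ x in Ω, (-jdet (fun i y => (gradSq v y + ε) ^ (β/2) * pd i v y) x) * ψ x)
      = -(1/2) * (∫ x in Ω, (gradSq v x + ε) ^ β * hessQuad ψ v x)
        + (1/(2*β+2)) * (∫ x in Ω, (gradSq v x + ε) ^ (β+1) * lap ψ x)
        - (β/(β+1)) * ∫ x in Ω, (gradSq v x + ε) ^ ((β-1)/2)
            * gradDot (fun y => (gradSq v y + ε) ^ ((β+1)/2)) v x * gradDot v ψ x := by
  have hβ1 : β + 1 ≠ 0 := by linarith
  have hv3 : ∀ x ∈ Ω, ContDiffAt ℝ 3 v x := fun x hx =>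
    (hv.contDiffAt (hΩ.mem_nhds hx)).of_le (WithTop.coe_le_coe.2 le_top)
  have hψ2 x : ContDiffAt ℝ 2 ψ x := hψ.1.contDiffAt.of_le (WithTop.coe_le_coe.2 le_top)
  have hzero : ∫ x in Ω, divergence (detIdentityFlux v ψ β ε) x = 0 :=
    setIntegral_divergence_eq_zero hψ.2.1 hψ.2.2
      (fun i x hx => contDiffAt_detIdentityFlux (hv3 x hx) (hψ2 x) hε i)
      (fun i _ hx => detIdentityFlux_eq_zero_of_notMem_tsupport hx i)
  rw [setIntegral_congr_fun hΩ.measurableSet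
    fun x hx => divergence_detIdentityFlux (hv3 x hx) (hψ2 x) hε hβ1] at hzero
  obtain ⟨hL, hB, hC, hD⟩ := integrableOn_identity_terms (β := β) hv3 hψ hε
  rw [integral_add ?_ (hD.const_mul _), integral_sub ?_ (hC.const_mul _),
    integral_add hL (hB.const_mul _), integral_const_mul, integral_const_mul,
    integral_const_mul] at hzero
  · unfold weightedGrad at hzero
    linarith
  · exact hL.add (hB.const_mul _)
  · exact (hL.add (hB.const_mul _)).sub (hC.const_mul _)
end
end

section
/- Let B(0,2) ⊆ ℝ² be the open ball of radius 2 and let v : B(0,2) → ℝ be differentiable at every point. Let b ∈ ℝ, a ∈ ℝ², set P(x) = b + a·x, and let μ ≥ 0 satisfy |v(x) − P(x)| ≤ μ for all x ∈ B(0,2). Assume furthermore that |Dv(x)| ≤ |a| + 2μ for all x ∈ B(0,1). Then the average (1/|B(0,1)|) ∫_{B(0,1)} |Dv − a|² dx ≤ 20 μ (|a| + μ). -/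
open Real MeasureTheory
open scoped RealInnerProductSpace

noncomputable section

/-!
Expanding the square and using `|Dv| ≤ |a| + 2μ` gives
`|Dv - a|² ≤ 4μ(|a| + μ) + 2(|a|² - Dv·a)` pointwise. The integral of `|a|² - Dv·a` over the
unit disc is at most `4μ|a|`: slice the disc into chords parallel to `a`; on a chord of length
`ℓ` the integral of `|a| - ∂_{a/|a|} v` is `|a|ℓ` minus the increment of `v` along the chord,
and since `v` is `μ`-close to `P` at both endpoints that increment is at least `|a|ℓ - 2μ`;
integrating `2μ|a|` over the abscissae in `(-1, 1)` gives `4μ|a|`. Dividing by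
`|B(0,1)| = π > 3` yields the constant `4 + 8/3 ≤ 20`.
-/

section

open Set

def unitDisc : Set (ℝ × ℝ) := {p | p.1 ^ 2 + p.2 ^ 2 < 1}

theorem measurableSet_unitDisc : MeasurableSet unitDisc :=
  (isOpen_lt (by fun_prop) continuous_const).measurableSet

-- Valid for every `t`: when `|t| ≥ 1` both sides are empty, since `√` of a negative number is `0`.
theorem mk_mem_unitDisc_iff {t s : ℝ} :
    (t, s) ∈ unitDisc ↔ s ∈ Ioo (-√(1 - t ^ 2)) √(1 - t ^ 2) := by
  rw [mem_Ioo, ← abs_lt, Real.lt_sqrt (abs_nonneg s), sq_abs, lt_sub_iff_add_lt']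
  rfl

theorem setIntegral_unitDisc_le {F : ℝ × ℝ → ℝ} (hF : IntegrableOn F unitDisc) {C : ℝ}
    (hC : ∀ t ∈ Ioo (-1 : ℝ) 1, ∫ s in Ioo (-√(1 - t ^ 2)) √(1 - t ^ 2), F (t, s) ≤ C) :
    ∫ p in unitDisc, F p ≤ 2 * C := by
  have hFi : Integrable (unitDisc.indicator F) (volume.prod volume) := by
    rw [← Measure.volume_eq_prod]
    exact hF.integrable_indicator measurableSet_unitDisc
  have hslice : ∀ t, ∫ s, unitDisc.indicator F (t, s) =
      ∫ s in Ioo (-√(1 - t ^ 2)) √(1 - t ^ 2), F (t, s) := by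
    intro t
    rw [← integral_indicator measurableSet_Ioo]
    congr 1 with s
    simp only [indicator, mk_mem_unitDisc_iff]
  have hslice_le : ∀ t, ∫ s, unitDisc.indicator F (t, s) ≤
      (Ioo (-1 : ℝ) 1).indicator (fun _ => C) t := by
    intro t
    by_cases ht : t ∈ Ioo (-1 : ℝ) 1
    · rw [indicator_of_mem ht, hslice]
      exact hC t ht
    · have h1 : 1 ≤ t ^ 2 := by
        rw [one_le_sq_iff_one_le_abs, le_abs']
        simp only [mem_Ioo, not_and_or, not_lt] at ht
        tauto
      rw [indicator_of_notMem ht, hslice, Real.sqrt_eq_zero'.mpr (by linarith), neg_zero,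
        Ioo_self, Measure.restrict_empty, integral_zero_measure]
  calc ∫ p in unitDisc, F p = ∫ t, ∫ s, unitDisc.indicator F (t, s) := by
        rw [← integral_indicator measurableSet_unitDisc, Measure.volume_eq_prod,
          integral_prod _ hFi]
    _ ≤ ∫ t, (Ioo (-1 : ℝ) 1).indicator (fun _ => C) t :=
        integral_mono hFi.integral_prod_left
          ((integrable_indicator_iff measurableSet_Ioo).mpr
            (integrableOn_const measure_Ioo_lt_top.ne)) hslice_le
    _ = 2 * C := by
        rw [integral_indicator_const _ measurableSet_Ioo, measureReal_def, Real.volume_Ioo,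
          ENNReal.toReal_ofReal (by norm_num), smul_eq_mul]
        norm_num

theorem setIntegral_Ioo_sub_deriv_le {f f' : ℝ → ℝ} {S α β μ : ℝ} (hS : 0 ≤ S)
    (hf : ∀ s ∈ Icc (-S) S, HasDerivAt f (f' s) s) (hf' : IntegrableOn f' (Ioo (-S) S))
    (hclose : ∀ s ∈ Icc (-S) S, |f s - (β + α * s)| ≤ μ) :
    ∫ s in Ioo (-S) S, (α - f' s) ≤ 2 * μ := by
  have hSS : -S ≤ S := by linarith
  have hftc : ∫ s in Ioo (-S) S, f' s = f S - f (-S) := by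
    rw [← integral_Ioc_eq_integral_Ioo, ← intervalIntegral.integral_of_le hSS]
    exact intervalIntegral.integral_eq_sub_of_hasDerivAt (by rwa [uIcc_of_le hSS])
      ((intervalIntegrable_iff_integrableOn_Ioo_of_le hSS).mpr hf')
  have hright := abs_le.mp (hclose S (right_mem_Icc.mpr hSS))
  have hleft := abs_le.mp (hclose (-S) (left_mem_Icc.mpr hSS))
  rw [integral_sub (integrableOn_const (C := α) measure_Ioo_lt_top.ne) hf', hftc,
    setIntegral_const, measureReal_def, Real.volume_Ioo, ENNReal.toReal_ofReal (by linarith),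
    smul_eq_mul]
  linarith

theorem exists_orthonormalBasis_apply_eq {ι F : Type*} [Fintype ι] [NormedAddCommGroup F]
    [InnerProductSpace ℝ F] [FiniteDimensional ℝ F] (hι : Module.finrank ℝ F = Fintype.card ι)
    {e : F} (he : ‖e‖ = 1) (i : ι) : ∃ b : OrthonormalBasis ι ℝ F, b i = e := by
  have hv : Orthonormal ℝ (({i} : Set ι).domRestrict fun _ => e) := by
    rw [orthonormal_iff_ite]
    rintro ⟨j, rfl⟩ ⟨k, rfl⟩
    simp [Set.domRestrict, he]
  obtain ⟨b, hb⟩ := hv.exists_orthonormalBasis_extension_of_card_eq hι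
  exact ⟨b, hb i rfl⟩

theorem norm_sub_sq_le_of_norm_le {E : Type*} [NormedAddCommGroup E] [InnerProductSpace ℝ E]
    {g a : E} {μ : ℝ} (h : ‖g‖ ≤ ‖a‖ + 2 * μ) :
    ‖g - a‖ ^ 2 ≤ 4 * μ * (‖a‖ + μ) + 2 * (‖a‖ ^ 2 - ⟪g, a⟫) := by
  rw [norm_sub_sq_real]
  nlinarith [pow_le_pow_left₀ (norm_nonneg g) h 2]

variable {F : Type*} [NormedAddCommGroup F] [InnerProductSpace ℝ F] [MeasurableSpace F]
  [BorelSpace F]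

namespace OrthonormalBasis

variable (b : OrthonormalBasis (Fin 2) ℝ F)

def planeEquiv : ℝ × ℝ ≃ᵐ F :=
  MeasurableEquiv.finTwoArrow.symm.trans ((MeasurableEquiv.toLp 2 (Fin 2 → ℝ)).trans
    b.measurableEquiv.symm)

theorem planeEquiv_apply (p : ℝ × ℝ) : b.planeEquiv p = p.1 • b 0 + p.2 • b 1 := by
  simp [planeEquiv, OrthonormalBasis.measurableEquiv, ← b.sum_repr_symm, Fin.sum_univ_two]

theorem measurePreserving_planeEquiv [FiniteDimensional ℝ F] :
    MeasurePreserving b.planeEquiv :=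
  (volume_preserving_finTwoArrow ℝ).symm.trans
    ((EuclideanSpace.volume_preserving_symm_measurableEquiv_toLp (Fin 2)).symm.trans
      b.measurePreserving_measurableEquiv.symm)

theorem norm_planeEquiv (p : ℝ × ℝ) : ‖b.planeEquiv p‖ = √(p.1 ^ 2 + p.2 ^ 2) := by
  simp [planeEquiv, OrthonormalBasis.measurableEquiv, EuclideanSpace.norm_eq, Fin.sum_univ_two]

theorem inner_planeEquiv (p : ℝ × ℝ) : ⟪b 1, b.planeEquiv p⟫ = p.2 := by
  simp [planeEquiv, OrthonormalBasis.measurableEquiv, ← b.repr_apply_apply]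

theorem hasDerivAt_planeEquiv_mk (t s : ℝ) :
    HasDerivAt (fun s => b.planeEquiv (t, s)) (b 1) s := by
  simp_rw [planeEquiv_apply]
  simpa using ((hasDerivAt_id s).smul_const (b 1)).const_add (t • b 0)

theorem planeEquiv_preimage_ball : b.planeEquiv ⁻¹' Metric.ball 0 1 = unitDisc := by
  ext p
  rw [mem_preimage, Metric.mem_ball, dist_zero_right, norm_planeEquiv, Real.sqrt_lt' one_pos,
    one_pow]
  rfl

theorem planeEquiv_mem_closedBall {t s : ℝ} (ht : t ^ 2 ≤ 1)
    (hs : s ∈ Icc (-√(1 - t ^ 2)) √(1 - t ^ 2)) :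
    b.planeEquiv (t, s) ∈ Metric.closedBall 0 1 := by
  have hs2 := (Real.le_sqrt (abs_nonneg s) (by linarith)).mp (abs_le.mpr hs)
  rw [Metric.mem_closedBall, dist_zero_right, norm_planeEquiv, Real.sqrt_le_one, ← sq_abs s]
  linarith

end OrthonormalBasis

variable [FiniteDimensional ℝ F]

theorem integrableOn_inner_gradient_comp {X : Type*} [MeasurableSpace X] {ν : Measure X}
    {φ : X → F} (hφ : Measurable φ) {s : Set X} (hs : MeasurableSet s) (hνs : ν s < ⊤)
    {v : F → ℝ} {M : ℝ} (hgrad : ∀ y ∈ s, ‖gradient v (φ y)‖ ≤ M) (w : F) :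
    IntegrableOn (fun y => ⟪gradient v (φ y), w⟫) s ν := by
  have hmeas : Measurable fun x => ⟪gradient v x, w⟫ := by
    simp_rw [inner_gradient_left]
    exact measurable_fderiv_apply_const ℝ v w
  exact IntegrableOn.of_bound hνs (hmeas.comp hφ).aestronglyMeasurable (M * ‖w‖)
    (ae_restrict_of_forall_mem hs fun y hy =>
      (norm_inner_le_norm _ _).trans (by gcongr; exact hgrad y hy))

theorem setIntegral_ball_sub_inner_gradient_le (b : OrthonormalBasis (Fin 2) ℝ F) {v : F → ℝ}
    {α β μ M : ℝ} (hv : ∀ x ∈ Metric.closedBall 0 1, DifferentiableAt ℝ v x)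
    (hclose : ∀ x ∈ Metric.closedBall 0 1, |v x - (β + α * ⟪b 1, x⟫)| ≤ μ)
    (hgrad : ∀ x ∈ Metric.ball 0 1, ‖gradient v x‖ ≤ M) :
    ∫ x in Metric.ball 0 1, (α - ⟪gradient v x, b 1⟫) ≤ 4 * μ := by
  set Φ := b.planeEquiv
  have hΦ := b.measurePreserving_planeEquiv
  rw [← hΦ.setIntegral_preimage_emb Φ.measurableEmbedding, b.planeEquiv_preimage_ball,
    show 4 * μ = 2 * (2 * μ) by ring]
  refine setIntegral_unitDisc_le ?_ fun t ht => ?_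
  · have hvol : volume unitDisc < ⊤ := by
      rw [← b.planeEquiv_preimage_ball, hΦ.measure_preimage measurableSet_ball.nullMeasurableSet]
      exact measure_ball_lt_top
    refine (integrableOn_const hvol.ne).sub
      (integrableOn_inner_gradient_comp Φ.measurable measurableSet_unitDisc hvol
        (fun p hp => hgrad _ ?_) (b 1))
    rwa [← mem_preimage, b.planeEquiv_preimage_ball]
  · have ht2 : t ^ 2 ≤ 1 := by rw [sq_le_one_iff_abs_le_one, abs_le]; exact ⟨ht.1.le, ht.2.le⟩
    refine setIntegral_Ioo_sub_deriv_le (f := fun s => v (Φ (t, s))) (β := β)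
      (Real.sqrt_nonneg _) (fun s hs => ?_) ?_ (fun s hs => ?_)
    · rw [inner_gradient_left]
      exact (hv _ (b.planeEquiv_mem_closedBall ht2 hs)).hasFDerivAt.comp_hasDerivAt s
        (b.hasDerivAt_planeEquiv_mk t s)
    · refine integrableOn_inner_gradient_comp (Φ.measurable.comp measurable_prodMk_left)
        measurableSet_Ioo measure_Ioo_lt_top (fun s hs => hgrad _ ?_) (b 1)
      show (t, s) ∈ Φ ⁻¹' Metric.ball 0 1
      rw [b.planeEquiv_preimage_ball]
      exact mk_mem_unitDisc_iff.mpr hs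
    · simpa [Φ, b.inner_planeEquiv] using hclose _ (b.planeEquiv_mem_closedBall ht2 hs)

theorem setIntegral_ball_sq_norm_sub_inner_gradient_le (hF : Module.finrank ℝ F = 2)
    {v : F → ℝ} {a : F} {β μ M : ℝ} (hv : ∀ x ∈ Metric.closedBall 0 1, DifferentiableAt ℝ v x)
    (hclose : ∀ x ∈ Metric.closedBall 0 1, |v x - (β + ⟪a, x⟫)| ≤ μ)
    (hgrad : ∀ x ∈ Metric.ball 0 1, ‖gradient v x‖ ≤ M) :
    ∫ x in Metric.ball 0 1, (‖a‖ ^ 2 - ⟪gradient v x, a⟫) ≤ 4 * μ * ‖a‖ := by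
  rcases eq_or_ne a 0 with rfl | ha
  · simp
  have hna : ‖a‖ ≠ 0 := norm_ne_zero_iff.mpr ha
  have he : ‖‖a‖⁻¹ • a‖ = 1 := by rw [norm_smul, norm_inv, norm_norm, inv_mul_cancel₀ hna]
  obtain ⟨b, hb⟩ := exists_orthonormalBasis_apply_eq (hF.trans (Fintype.card_fin 2).symm) he 1
  have hinner : ∀ y, ⟪y, a⟫ = ‖a‖ * ⟪y, b 1⟫ := fun y => by
    rw [hb, real_inner_smul_right, mul_inv_cancel_left₀ hna]
  have hkey := setIntegral_ball_sub_inner_gradient_le b (α := ‖a‖) (β := β) hv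
    (fun x hx => by rw [real_inner_comm x, ← hinner, real_inner_comm]; exact hclose x hx) hgrad
  calc ∫ x in Metric.ball 0 1, (‖a‖ ^ 2 - ⟪gradient v x, a⟫)
      = ‖a‖ * ∫ x in Metric.ball 0 1, (‖a‖ - ⟪gradient v x, b 1⟫) := by
        rw [← integral_const_mul]
        congr 1 with x
        rw [hinner]
        ring
    _ ≤ 4 * μ * ‖a‖ := by nlinarith [norm_nonneg a]

end

/-- Lemma 2.7 with r = 1: L² closeness of the gradient to the affine slope. -/
theorem stmt_7 (v : E2 → ℝ)
    (hv : ∀ x ∈ Metric.ball (0 : E2) 2, DifferentiableAt ℝ v x)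
    (b : ℝ) (a : E2) (μ : ℝ) (hμ : 0 ≤ μ)
    (hclose : ∀ x ∈ Metric.ball (0 : E2) 2, |v x - (b + ⟪a, x⟫)| ≤ μ)
    (hgrad : ∀ x ∈ Metric.ball (0 : E2) 1, ‖gradient v x‖ ≤ ‖a‖ + 2 * μ) :
    (⨍ x in Metric.ball (0 : E2) 1, ‖gradient v x - a‖ ^ 2) ≤ 20 * μ * (‖a‖ + μ) := by
  set B := Metric.ball (0 : E2) 1
  have hsub : Metric.closedBall (0 : E2) 1 ⊆ Metric.ball 0 2 :=
    Metric.closedBall_subset_ball (by norm_num)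
  have hkey : ∫ x in B, (‖a‖ ^ 2 - ⟪gradient v x, a⟫) ≤ 4 * μ * ‖a‖ :=
    setIntegral_ball_sq_norm_sub_inner_gradient_le finrank_euclideanSpace_fin
      (fun x hx => hv x (hsub hx)) (fun x hx => hclose x (hsub hx)) hgrad
  have hvol : volume.real B = π := by simp [B, measureReal_def, pi_nonneg]
  have hslope : IntegrableOn (fun x => ‖a‖ ^ 2 - ⟪gradient v x, a⟫) B :=
    (integrableOn_const measure_ball_lt_top.ne).sub (integrableOn_inner_gradient_comp
      measurable_id measurableSet_ball measure_ball_lt_top hgrad a)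
  have hconst : IntegrableOn (fun _ => 4 * μ * (‖a‖ + μ)) B :=
    integrableOn_const measure_ball_lt_top.ne
  have hle : ∫ x in B, ‖gradient v x - a‖ ^ 2 ≤ 4 * μ * (‖a‖ + μ) * π + 2 * (4 * μ * ‖a‖) :=
    calc ∫ x in B, ‖gradient v x - a‖ ^ 2
        ≤ ∫ x in B, (4 * μ * (‖a‖ + μ) + 2 * (‖a‖ ^ 2 - ⟪gradient v x, a⟫)) :=
          integral_mono_of_nonneg (.of_forall fun _ => sq_nonneg _)
            (by exact hconst.add (hslope.const_mul 2))
            (ae_restrict_of_forall_mem measurableSet_ball fun x hx =>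
              norm_sub_sq_le_of_norm_le (hgrad x hx))
      _ ≤ 4 * μ * (‖a‖ + μ) * π + 2 * (4 * μ * ‖a‖) := by
          rw [integral_add hconst (hslope.const_mul 2), setIntegral_const, integral_const_mul,
            hvol, smul_eq_mul, mul_comm π]
          linarith
  rw [setAverage_eq, hvol, smul_eq_mul, inv_mul_le_iff₀ pi_pos]
  nlinarith [pi_gt_three, mul_nonneg hμ (norm_nonneg a),
    mul_nonneg (mul_nonneg hμ (add_nonneg (norm_nonneg a) hμ)) (sub_nonneg.mpr pi_gt_three.le)]
end
end

section
/- Let r > 0 and let u : B(0,2r) → ℝ be continuous, where B(0,2r) ⊆ ℝ². Assume u enjoys comparison with cones centered at interior points: for every x and s > 0 with the closed ball of center x and radius s contained in B(0,2r) and every c ≥ 0, (i) if u(y) ≤ u(x) + c|y − x| for all y with |y − x| = s, then u(y) ≤ u(x) + c|y − x| for all y with |y − x| ≤ s; and (ii) if u(y) ≥ u(x) − c|y − x| for all y with |y − x| = s, then u(y) ≥ u(x) − c|y − x| for all y with |y − x| ≤ s. Let b ∈ ℝ, a ∈ ℝ², and λ ≥ 0 be such that |u(x) − b − a·x| ≤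 λ for all x ∈ B(0,2r). Then for every x ∈ B(0,r) and every y with |y − x| < r: |u(y) − u(x)| ≤ (|a| + 2λ/r) |y − x|. -/
open Real MeasureTheory
open scoped RealInnerProductSpace

noncomputable section

/-!
Cone comparison on the ball `closedBall x r ⊆ B(0, 2r)` reduces the Lipschitz bound at `x` to the
sphere `‖z - x‖ = r`, where flatness gives `|u z - u x| ≤ ‖a‖ r + 2λ = (‖a‖ + 2λ/r) r`.
-/

lemma abs_sub_le_of_abs_sub_affine_le {F : Type*} [NormedAddCommGroup F] [InnerProductSpace ℝ F]
    {u : F → ℝ} {b lam : ℝ} {a x z : F}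
    (hz : |u z - b - ⟪a, z⟫| ≤ lam) (hx : |u x - b - ⟪a, x⟫| ≤ lam) :
    |u z - u x| ≤ ‖a‖ * ‖z - x‖ + 2 * lam := by
  have hlin : |⟪a, z - x⟫| ≤ ‖a‖ * ‖z - x‖ := abs_real_inner_le_norm a (z - x)
  rw [inner_sub_right] at hlin
  rw [abs_le] at *
  constructor <;> linarith

lemma abs_sub_le_of_cone_comparison {E : Type*} [NormedAddCommGroup E] {u : E → ℝ} {x : E}
    {s c : ℝ}
    (habove : (∀ y, ‖y - x‖ = s → u y ≤ u x + c * ‖y - x‖) →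
      ∀ y, ‖y - x‖ ≤ s → u y ≤ u x + c * ‖y - x‖)
    (hbelow : (∀ y, ‖y - x‖ = s → u x - c * ‖y - x‖ ≤ u y) →
      ∀ y, ‖y - x‖ ≤ s → u x - c * ‖y - x‖ ≤ u y)
    (hsphere : ∀ z, ‖z - x‖ = s → |u z - u x| ≤ c * s) {y : E} (hy : ‖y - x‖ ≤ s) :
    |u y - u x| ≤ c * ‖y - x‖ := by
  have hup := habove (fun z hz => by have := (abs_le.mp (hsphere z hz)).2; rw [hz]; linarith) y hy
  have hdown := hbelow (fun z hz => by have := (abs_le.mp (hsphere z hz)).1; rw [hz]; linarith) y hy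
  rw [abs_le]
  constructor <;> linarith

theorem stmt_8_general (r : ℝ) (hr : 0 < r) (u : E2 → ℝ)
    (hcone_above : ∀ x : E2, ∀ s : ℝ, 0 < s →
      Metric.closedBall x s ⊆ Metric.ball (0 : E2) (2*r) →
      ∀ c : ℝ, 0 ≤ c →
      (∀ y : E2, ‖y - x‖ = s → u y ≤ u x + c * ‖y - x‖) →
      (∀ y : E2, ‖y - x‖ ≤ s → u y ≤ u x + c * ‖y - x‖))
    (hcone_below : ∀ x : E2, ∀ s : ℝ, 0 < s →
      Metric.closedBall x s ⊆ Metric.ball (0 : E2) (2*r) →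
      ∀ c : ℝ, 0 ≤ c →
      (∀ y : E2, ‖y - x‖ = s → u x - c * ‖y - x‖ ≤ u y) →
      (∀ y : E2, ‖y - x‖ ≤ s → u x - c * ‖y - x‖ ≤ u y))
    (b : ℝ) (a : E2) (lam : ℝ) (hlam : 0 ≤ lam)
    (hflat : ∀ x ∈ Metric.ball (0 : E2) (2*r), |u x - b - ⟪a, x⟫| ≤ lam) :
    ∀ x ∈ Metric.ball (0 : E2) r, ∀ y : E2, ‖y - x‖ < r →
      |u y - u x| ≤ (‖a‖ + 2 * lam / r) * ‖y - x‖ := by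
  intro x hx y hy
  have hball : Metric.closedBall x r ⊆ Metric.ball (0 : E2) (2 * r) :=
    Metric.closedBall_subset_ball' (by rw [Metric.mem_ball] at hx; linarith)
  have hc : 0 ≤ ‖a‖ + 2 * lam / r := by positivity
  refine abs_sub_le_of_cone_comparison (hcone_above x r hr hball _ hc)
    (hcone_below x r hr hball _ hc) (fun z hz => ?_) hy.le
  have hxz := abs_sub_le_of_abs_sub_affine_le
    (hflat z (hball (by rw [Metric.mem_closedBall, dist_eq_norm, hz])))
    (hflat x (hball (Metric.mem_closedBall_self hr.le)))
  calc |u z - u x| ≤ ‖a‖ * r + 2 * lam := by rwa [hz] at hxz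
    _ = (‖a‖ + 2 * lam / r) * r := by field_simp

/-- Lipschitz bound from flatness via comparison with cones (Lemma 2.6). -/
theorem stmt_8 (r : ℝ) (hr : 0 < r) (u : E2 → ℝ)
    (hu : ContinuousOn u (Metric.ball (0 : E2) (2*r)))
    (hcone_above : ∀ x : E2, ∀ s : ℝ, 0 < s →
      Metric.closedBall x s ⊆ Metric.ball (0 : E2) (2*r) →
      ∀ c : ℝ, 0 ≤ c →
      (∀ y : E2, ‖y - x‖ = s → u y ≤ u x + c * ‖y - x‖) →
      (∀ y : E2, ‖y - x‖ ≤ s → u y ≤ u x + c * ‖y - x‖))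
    (hcone_below : ∀ x : E2, ∀ s : ℝ, 0 < s →
      Metric.closedBall x s ⊆ Metric.ball (0 : E2) (2*r) →
      ∀ c : ℝ, 0 ≤ c →
      (∀ y : E2, ‖y - x‖ = s → u x - c * ‖y - x‖ ≤ u y) →
      (∀ y : E2, ‖y - x‖ ≤ s → u x - c * ‖y - x‖ ≤ u y))
    (b : ℝ) (a : E2) (lam : ℝ) (hlam : 0 ≤ lam)
    (hflat : ∀ x ∈ Metric.ball (0 : E2) (2*r), |u x - b - ⟪a, x⟫| ≤ lam) :
    ∀ x ∈ Metric.ball (0 : E2) r, ∀ y : E2, ‖y - x‖ < r →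
      |u y - u x| ≤ (‖a‖ + 2 * lam / r) * ‖y - x‖ :=
  stmt_8_general r hr u hcone_above hcone_below b a lam hlam hflat
end
end
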